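/- Let u be locally integrable, x ∈ ℝⁿ, r > 0, and let q_{x,r} minimize q ↦ (⨍_{B(x,r)} |u − q|^{1/2})². Then |q_{x,r}| ≤ 2 φ(x,r) + 2 (⨍_{B(x,r)} |u|^{1/2})² ≤ 4 r^{−n} ω_n^{−1} ‖u‖_{L¹(B(x,r))}, where φ(x,r) is the minimal value and ω_n is the volume of the unit ball. -/

import Mathlib

/-!
Since `√|·|` is subadditive, `√|q| ≤ √|u y - q| + √|u y|` for every `y`; averaging over the ball
and squaring with `(a + b)² ≤ 2a² + 2b²` gives the first inequality. For the second, the minimal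
value `φ` is at most the value at `c = 0`, and `(⨍ √|u|)² ≤ ⨍ |u|` by Jensen's inequality; the
average over `B(x, r)` is `r⁻ⁿ ω_n⁻¹` times the integral.
-/

open MeasureTheory Set Metric

lemma Real.sqrt_abs_sub_le (a b : ℝ) : √|a - b| ≤ √|a| + √|b| :=
  (Real.sqrt_le_sqrt (abs_sub a b)).trans <| (Real.sqrt_le_left (by positivity)).2 <| by
    nlinarith [Real.sq_sqrt (abs_nonneg a), Real.sq_sqrt (abs_nonneg b),
      mul_nonneg (Real.sqrt_nonneg |a|) (Real.sqrt_nonneg |b|)]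

namespace MeasureTheory

variable {α : Type*} [MeasurableSpace α] {μ : Measure α} {u : α → ℝ}

lemma Integrable.sqrt_abs [IsFiniteMeasure μ] (hu : Integrable u μ) :
    Integrable (fun y => √|u y|) μ := by
  refine ((integrable_const 1).add hu.abs).mono'
    (Real.continuous_sqrt.comp_aestronglyMeasurable hu.abs.aestronglyMeasurable) ?_
  filter_upwards with y
  rw [Real.norm_of_nonneg (Real.sqrt_nonneg _), Pi.add_apply]
  nlinarith [Real.sq_sqrt (abs_nonneg (u y)), sq_nonneg (√|u y| - 1)]

lemma iInf_sq_average_sqrt_abs_sub_le :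
    ⨅ c : ℝ, (⨍ y, √|u y - c| ∂μ) ^ 2 ≤ (⨍ y, √|u y| ∂μ) ^ 2 := by
  simpa using ciInf_le (f := fun c : ℝ => (⨍ y, √|u y - c| ∂μ) ^ 2)
    ⟨0, by rintro _ ⟨c, rfl⟩; positivity⟩ 0

variable [IsFiniteMeasure μ] [NeZero μ]

lemma sqrt_abs_le_average_sqrt_abs_sub_add (hu : Integrable u μ) (q : ℝ) :
    √|q| ≤ (⨍ y, √|u y - q| ∂μ) + ⨍ y, √|u y| ∂μ := by
  have hsub : Integrable (fun y => √|u y - q|) μ := (hu.sub (integrable_const q)).sqrt_abs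
  calc √|q| = ⨍ _, √|q| ∂μ := (average_const μ _).symm
    _ ≤ ⨍ y, (√|u y - q| + √|u y|) ∂μ := by
      rw [average_eq', average_eq']
      refine integral_mono (integrable_const _) (hsub.add hu.sqrt_abs).to_average fun y => ?_
      simpa [add_comm] using Real.sqrt_abs_sub_le (u y) (u y - q)
    _ = (⨍ y, √|u y - q| ∂μ) + ⨍ y, √|u y| ∂μ := by
      rw [average_eq', average_eq', average_eq',
        integral_add hsub.to_average hu.sqrt_abs.to_average]

lemma abs_le_two_mul_sq_average_sqrt_abs_sub_add (hu : Integrable u μ) (q : ℝ) :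
    |q| ≤ 2 * (⨍ y, √|u y - q| ∂μ) ^ 2 + 2 * (⨍ y, √|u y| ∂μ) ^ 2 :=
  calc |q| = √|q| ^ 2 := (Real.sq_sqrt (abs_nonneg q)).symm
    _ ≤ ((⨍ y, √|u y - q| ∂μ) + ⨍ y, √|u y| ∂μ) ^ 2 :=
      pow_le_pow_left₀ (Real.sqrt_nonneg _) (sqrt_abs_le_average_sqrt_abs_sub_add hu q) 2
    _ ≤ _ := by linarith [add_sq_le (a := ⨍ y, √|u y - q| ∂μ) (b := ⨍ y, √|u y| ∂μ)]

lemma sq_average_sqrt_abs_le_average_abs (hu : Integrable u μ) :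
    (⨍ y, √|u y| ∂μ) ^ 2 ≤ ⨍ y, |u y| ∂μ := by
  have hsq : (fun y => √|u y| ^ 2) = fun y => |u y| :=
    funext fun y => Real.sq_sqrt (abs_nonneg (u y))
  have := (convexOn_pow 2).map_average_le (continuous_pow 2).continuousOn isClosed_Ici
    (.of_forall fun y => Real.sqrt_nonneg |u y|) hu.sqrt_abs
    (by simpa only [Function.comp_def, hsq] using hu.abs)
  simpa only [hsq] using this

end MeasureTheory

lemma MeasureTheory.Measure.setAverage_ball_eq {E : Type*} [NormedAddCommGroup E]
    [NormedSpace ℝ E] [MeasurableSpace E] [BorelSpace E] [FiniteDimensional ℝ E]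
    (μ : Measure E) [μ.IsAddHaarMeasure] (f : E → ℝ) (x : E) {r : ℝ} (hr : 0 < r) :
    ⨍ y in ball x r, f y ∂μ
      = r ^ (-(Module.finrank ℝ E : ℤ)) * (μ (ball 0 1)).toReal⁻¹ * ∫ y in ball x r, f y ∂μ := by
  rw [setAverage_eq, measureReal_def, μ.addHaar_ball_of_pos x hr, ENNReal.toReal_mul,
    ENNReal.toReal_ofReal (by positivity), smul_eq_mul, mul_inv, zpow_neg, zpow_natCast]

theorem stmt_11_general (n : ℕ) (u : EuclideanSpace ℝ (Fin n) → ℝ)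
    (hu : LocallyIntegrable u volume)
    (x : EuclideanSpace ℝ (Fin n)) (r : ℝ) (hr : 0 < r) (q : ℝ)
    (hq : (⨍ y in ball x r, Real.sqrt |u y - q|) ^ 2
      = ⨅ c : ℝ, (⨍ y in ball x r, Real.sqrt |u y - c|) ^ 2) :
    |q| ≤ 2 * (⨅ c : ℝ, (⨍ y in ball x r, Real.sqrt |u y - c|) ^ 2)
        + 2 * (⨍ y in ball x r, Real.sqrt |u y|) ^ 2 ∧
    2 * (⨅ c : ℝ, (⨍ y in ball x r, Real.sqrt |u y - c|) ^ 2)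
        + 2 * (⨍ y in ball x r, Real.sqrt |u y|) ^ 2
      ≤ 4 * r ^ (-(n:ℤ)) *
        ((volume (ball (0 : EuclideanSpace ℝ (Fin n)) 1)).toReal)⁻¹ *
        ∫ y in ball x r, |u y| := by
  have : IsFiniteMeasure (volume.restrict (ball x r)) :=
    isFiniteMeasure_restrict.2 measure_ball_lt_top.ne
  have : NeZero (volume.restrict (ball x r)) :=
    ⟨by simpa [Measure.restrict_eq_zero] using (measure_ball_pos volume x hr).ne'⟩
  have hu' : IntegrableOn u (ball x r) :=
    (hu.integrableOn_isCompact (isCompact_closedBall x r)).mono_set ball_subset_closedBall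
  refine ⟨hq ▸ abs_le_two_mul_sq_average_sqrt_abs_sub_add hu' q, ?_⟩
  have hball := volume.setAverage_ball_eq (fun y => |u y|) x hr
  rw [finrank_euclideanSpace_fin] at hball
  linarith [iInf_sq_average_sqrt_abs_sub_le (μ := volume.restrict (ball x r)) (u := u),
    sq_average_sqrt_abs_le_average_abs hu']

/-- Bound on the minimizing constant:
|q_{x,r}| ≤ 2φ(x,r) + 2(⨍|u|^{1/2})² ≤ 4 r^{−n} ω_n^{−1} ‖u‖_{L¹(B(x,r))}. -/
theorem stmt_11 (n : ℕ) (hn : 1 ≤ n) (u : EuclideanSpace ℝ (Fin n) → ℝ)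
    (hu : LocallyIntegrable u volume)
    (x : EuclideanSpace ℝ (Fin n)) (r : ℝ) (hr : 0 < r) (q : ℝ)
    (hq : (⨍ y in ball x r, Real.sqrt |u y - q|) ^ 2
      = ⨅ c : ℝ, (⨍ y in ball x r, Real.sqrt |u y - c|) ^ 2) :
    |q| ≤ 2 * (⨅ c : ℝ, (⨍ y in ball x r, Real.sqrt |u y - c|) ^ 2)
        + 2 * (⨍ y in ball x r, Real.sqrt |u y|) ^ 2 ∧
    2 * (⨅ c : ℝ, (⨍ y in ball x r, Real.sqrt |u y - c|) ^ 2)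
        + 2 * (⨍ y in ball x r, Real.sqrt |u y|) ^ 2
      ≤ 4 * r ^ (-(n:ℤ)) *
        ((volume (ball (0 : EuclideanSpace ℝ (Fin n)) 1)).toReal)⁻¹ *
        ∫ y in ball x r, |u y| :=
  stmt_11_general n u hu x r hr q hq
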